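/- Pointwise Carleman estimate for ∂_t + L (inequality (5.23)): there exists C = C(T, μ₁) > 0 such that for every function u of class C³ on the closure of Q_T, all λ > 0 and s > 1, the following pointwise inequality holds on Q_T: (u_t + Lu)² φ_{λ,s}² ≥ (u_t²/4 + (Lu)²) φ_{λ,s}² + C λ s (t+2)^{s−1} |∇u|² φ_{λ,s}² + (λ² s²/2)(t+2)^{2s−2} u² φ_{λ,s}² + Σ_i ∂_{x_i}[ −2λ s (t+2)^{s−1} Σ_j a_ij u_{x_j} u φ_{λ,s}² + 2 Σ_j a_ij u_{x_j} (u_t + λ s (t+2)^{s−1} u) φ_{λ,s}² ] + ∂_t[ −λ s (t+2)^{s−1} u² φ_{λ,s}² − Σ_{i,j} a_ij u_{x_j} u_{x_i} φ_{λ,s}² ]. -/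

import Mathlib

/-! Write `σ = λ s (t+2)^(s-1)`, `φ = φ_{λ,s}` and `A∇u = (Σ_j a_ij u_{x_j})_i`, so that
`(φ²)' = 2σφ²` and `σ' ≥ 0` for `s > 1`. The `σu`-parts of the spatial flux cancel, so its
divergence is `2φ² (Lu·u_t + A∇u·∇u_t)`. Differentiating the time term produces the same cross
term `A∇u·∇u_t` with the opposite sign, because `a` is symmetric and `∂_t ∂_i u = ∂_i ∂_t u`.
What is left is `φ²` times
`(3/4) u_t² + 2σ u u_t + (3/2) σ² u² + σ' u² + 2σ (A∇u·∇u - μ₁ |∇u|²)`,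
which is nonnegative by ellipticity and `(3/4) w² + 2σvw + (3/2) σ²v² = (3w + 4σv)²/12 + σ²v²/6`;
so `C = 2μ₁` works. -/

open MeasureTheory Real Set

noncomputable section

/-- partial derivative in the `i`-th coordinate direction -/
def pd {n : ℕ} (i : Fin n) (f : (Fin n → ℝ) → ℝ) (x : Fin n → ℝ) : ℝ :=
  fderiv ℝ f x (Pi.single i 1)

/-- squared euclidean norm of the spatial gradient -/
def gradSq {n : ℕ} (f : (Fin n → ℝ) → ℝ) (x : Fin n → ℝ) : ℝ :=
  ∑ i, (pd i f x) ^ 2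

/-- divergence form elliptic operator `Lu = Σ_{i,j} ∂_i (a_ij ∂_j u)` -/
def ellOp {n : ℕ} (a : Fin n → Fin n → (Fin n → ℝ) → ℝ)
    (f : (Fin n → ℝ) → ℝ) (x : Fin n → ℝ) : ℝ :=
  ∑ i, ∑ j, pd i (fun y => a i j y * pd j f y) x

/-- open unit cube -/
def cube (n : ℕ) : Set (Fin n → ℝ) := {x | ∀ i, x i ∈ Ioo (0:ℝ) 1}

/-- closed unit cube -/
def cubeCl (n : ℕ) : Set (Fin n → ℝ) := {x | ∀ i, x i ∈ Icc (0:ℝ) 1}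

/-- Carleman weight `exp (λ (t+2)^s)` -/
def cwf (lam s t : ℝ) : ℝ := Real.exp (lam * (t + 2) ^ s)

/-- symmetric, `C¹`, uniformly elliptic coefficients on the closed cube -/
def Elliptic {n : ℕ} (a : Fin n → Fin n → (Fin n → ℝ) → ℝ) (μ₁ μ₂ : ℝ) : Prop :=
  (∀ i j, ContDiffOn ℝ 1 (a i j) (cubeCl n)) ∧
  (∀ i j x, a i j x = a j i x) ∧
  (∀ x ∈ cubeCl n, ∀ ξ : Fin n → ℝ,
      μ₁ * ∑ i, ξ i ^ 2 ≤ ∑ i, ∑ j, a i j x * ξ i * ξ j ∧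
      ∑ i, ∑ j, a i j x * ξ i * ξ j ≤ μ₂ * ∑ i, ξ i ^ 2)

/-- the regularity class `C^{2,1}` on the closure of `Q_T` -/
def C21 (n : ℕ) (T : ℝ) (u : (Fin n → ℝ) → ℝ → ℝ) : Prop :=
  ContinuousOn (fun p : (Fin n → ℝ) × ℝ => u p.1 p.2) (cubeCl n ×ˢ Icc 0 T) ∧
  (∀ t ∈ Icc (0:ℝ) T, ContDiffOn ℝ 2 (fun x => u x t) (cubeCl n)) ∧
  (∀ x ∈ cubeCl n, ContDiffOn ℝ 1 (u x) (Icc 0 T))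

/-- the admissible class `H`: `C^{2,1}` functions vanishing on `Γ₀ × (0,T)` with
vanishing conormal derivative on `Γ₁ × (0,T)` -/
def Adm (n : ℕ) [NeZero n] (T : ℝ) (a : Fin n → Fin n → (Fin n → ℝ) → ℝ)
    (u : (Fin n → ℝ) → ℝ → ℝ) : Prop :=
  C21 n T u ∧
  (∀ x ∈ cubeCl n, x 0 = 1 → ∀ t ∈ Icc (0:ℝ) T, u x t = 0) ∧
  (∀ x ∈ cubeCl n, ∀ t ∈ Icc (0:ℝ) T, ∀ i : Fin n,
      (x i = 0 ∨ (x i = 1 ∧ i ≠ 0)) →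
      ∑ j, a i j x * pd j (fun y => u y t) x = 0)

open Filter Topology

section Slices

variable {E F : Type*} [NormedAddCommGroup E] [NormedSpace ℝ E]
  [NormedAddCommGroup F] [NormedSpace ℝ F] {G : E × ℝ → F}

theorem DifferentiableAt.fderiv_comp_prodMk_left_apply {y : E} {τ : ℝ}
    (hG : DifferentiableAt ℝ G (y, τ)) (v : E) :
    fderiv ℝ (fun z => G (z, τ)) y v = fderiv ℝ G (y, τ) (v, 0) := by
  have h := hG.hasFDerivAt.comp y (hasFDerivAt_prodMk_left (𝕜 := ℝ) y τ)
  rw [Function.comp_def] at h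
  simp [h.fderiv]

theorem DifferentiableAt.hasDerivAt_comp_prodMk_right {y : E} {τ : ℝ}
    (hG : DifferentiableAt ℝ G (y, τ)) :
    HasDerivAt (fun σ => G (y, σ)) (fderiv ℝ G (y, τ) (0, 1)) τ :=
  hG.hasFDerivAt.comp_hasDerivAt τ ((hasDerivAt_const τ y).prodMk (hasDerivAt_id τ))

variable {x : E} {t : ℝ}

theorem ContDiffAt.fderiv_fderiv_apply_eq {p : E × ℝ} (hG : ContDiffAt ℝ 2 G p) (v w : E × ℝ) :
    fderiv ℝ (fun q => fderiv ℝ G q w) p v = fderiv ℝ (fderiv ℝ G) p v w := by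
  rw [fderiv_clm_apply ((hG.fderiv_right (m := 1) le_rfl).differentiableAt one_ne_zero)
    (differentiableAt_const w)]
  simp

theorem ContDiffAt.differentiableAt_fderiv_apply {p : E × ℝ} (hG : ContDiffAt ℝ 2 G p) (w : E × ℝ) :
    DifferentiableAt ℝ (fun q => fderiv ℝ G q w) p :=
  ((hG.fderiv_right (m := 1) le_rfl).differentiableAt one_ne_zero).clm_apply
    (differentiableAt_const w)

theorem ContDiffAt.eventually_differentiableAt {p : E × ℝ} (hG : ContDiffAt ℝ 2 G p) :
    ∀ᶠ q in 𝓝 p, DifferentiableAt ℝ G q :=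
  (hG.eventually (by simp)).mono fun _ hq => hq.differentiableAt two_ne_zero

theorem ContDiffAt.fderiv_comp_prodMk_left_eventuallyEq (hG : ContDiffAt ℝ 2 G (x, t)) (v : E) :
    (fun y => fderiv ℝ (fun z => G (z, t)) y v) =ᶠ[𝓝 x] fun y => fderiv ℝ G (y, t) (v, 0) :=
  ((continuous_id.prodMk continuous_const).continuousAt.eventually
    hG.eventually_differentiableAt).mono fun _ hy => hy.fderiv_comp_prodMk_left_apply v

theorem ContDiffAt.differentiableAt_fderiv_comp_prodMk_left (hG : ContDiffAt ℝ 2 G (x, t))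
    (v : E) : DifferentiableAt ℝ (fun y => fderiv ℝ (fun z => G (z, t)) y v) x := by
  refine DifferentiableAt.congr_of_eventuallyEq ?_ (hG.fderiv_comp_prodMk_left_eventuallyEq v)
  exact (hG.differentiableAt_fderiv_apply (v, 0)).comp x
    (hasFDerivAt_prodMk_left (𝕜 := ℝ) x t).differentiableAt

theorem ContDiffAt.deriv_comp_prodMk_right_eventuallyEq (hG : ContDiffAt ℝ 2 G (x, t)) :
    (fun y => deriv (fun σ => G (y, σ)) t) =ᶠ[𝓝 x] fun y => fderiv ℝ G (y, t) (0, 1) :=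
  ((continuous_id.prodMk continuous_const).continuousAt.eventually
    hG.eventually_differentiableAt).mono fun _ hy => hy.hasDerivAt_comp_prodMk_right.deriv

theorem ContDiffAt.differentiableAt_deriv_comp_prodMk_right (hG : ContDiffAt ℝ 2 G (x, t)) :
    DifferentiableAt ℝ (fun y => deriv (fun σ => G (y, σ)) t) x := by
  refine DifferentiableAt.congr_of_eventuallyEq ?_ hG.deriv_comp_prodMk_right_eventuallyEq
  exact (hG.differentiableAt_fderiv_apply (0, 1)).comp x
    (hasFDerivAt_prodMk_left (𝕜 := ℝ) x t).differentiableAt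

theorem ContDiffAt.hasDerivAt_fderiv_comp_prodMk_left (hG : ContDiffAt ℝ 2 G (x, t)) (v : E) :
    HasDerivAt (fun σ => fderiv ℝ (fun z => G (z, σ)) x v)
      (fderiv ℝ (fun y => deriv (fun σ => G (y, σ)) t) x v) t := by
  have h_eq : (fun σ => fderiv ℝ (fun z => G (z, σ)) x v) =ᶠ[𝓝 t]
      fun σ => fderiv ℝ G (x, σ) (v, 0) :=
    ((continuous_const.prodMk continuous_id).continuousAt.eventually
      hG.eventually_differentiableAt).mono fun _ h => h.fderiv_comp_prodMk_left_apply v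
  have h_time : HasDerivAt (fun σ => fderiv ℝ G (x, σ) (v, 0))
      (fderiv ℝ (fderiv ℝ G) (x, t) (0, 1) (v, 0)) t := by
    have h := (hG.differentiableAt_fderiv_apply (v, 0)).hasDerivAt_comp_prodMk_right
    rwa [hG.fderiv_fderiv_apply_eq] at h
  have h_space : fderiv ℝ (fun y => deriv (fun σ => G (y, σ)) t) x v
      = fderiv ℝ (fderiv ℝ G) (x, t) (v, 0) (0, 1) := by
    rw [hG.deriv_comp_prodMk_right_eventuallyEq.fderiv_eq,
      (hG.differentiableAt_fderiv_apply (0, 1)).fderiv_comp_prodMk_left_apply,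
      hG.fderiv_fderiv_apply_eq]
  rw [h_space, hG.isSymmSndFDerivAt (by simp) (v, 0) (0, 1)]
  exact h_time.congr_of_eventuallyEq h_eq

end Slices

section PartialDerivatives

variable {n : ℕ} {f g : (Fin n → ℝ) → ℝ} {x : Fin n → ℝ}

theorem pd_const_mul (hf : DifferentiableAt ℝ f x) (c : ℝ) (i : Fin n) :
    pd i (fun y => c * f y) x = c * pd i f x := by
  simp [pd, fderiv_const_mul hf]

theorem pd_mul (hf : DifferentiableAt ℝ f x) (hg : DifferentiableAt ℝ g x) (i : Fin n) :
    pd i (fun y => f y * g y) x = pd i f x * g x + f x * pd i g x := by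
  simp [pd, fderiv_fun_mul hf hg]
  ring

theorem pd_sum {ι : Type*} (s : Finset ι) {f : ι → (Fin n → ℝ) → ℝ}
    (hf : ∀ j ∈ s, DifferentiableAt ℝ (f j) x) (i : Fin n) :
    pd i (fun y => ∑ j ∈ s, f j y) x = ∑ j ∈ s, pd i (f j) x := by
  simp [pd, fderiv_fun_sum hf]

theorem sum_pd_flux_mul {a : Fin n → Fin n → (Fin n → ℝ) → ℝ} {w : (Fin n → ℝ) → ℝ}
    (ha : ∀ i j, DifferentiableAt ℝ (a i j) x) (hf : ∀ j, DifferentiableAt ℝ (pd j f) x)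
    (hw : DifferentiableAt ℝ w x) (c : ℝ) :
    ∑ i, pd i (fun y => c * ((∑ j, a i j y * pd j f y) * w y)) x
      = c * (ellOp a f x * w x + ∑ i, (∑ j, a i j x * pd j f x) * pd i w x) := by
  have hA : ∀ i, DifferentiableAt ℝ (fun y => ∑ j, a i j y * pd j f y) x := fun i =>
    DifferentiableAt.fun_sum fun j _ => (ha i j).fun_mul (hf j)
  have h_term : ∀ i, pd i (fun y => c * ((∑ j, a i j y * pd j f y) * w y)) x
      = c * ((∑ j, pd i (fun y => a i j y * pd j f y) x) * w x
        + (∑ j, a i j x * pd j f x) * pd i w x) := fun i => by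
    rw [pd_const_mul ((hA i).fun_mul hw), pd_mul (hA i) hw,
      pd_sum (f := fun j y => a i j y * pd j f y) _ fun j _ => (ha i j).fun_mul (hf j)]
  rw [Finset.sum_congr rfl fun i _ => h_term i, ← Finset.mul_sum, Finset.sum_add_distrib, ellOp,
    Finset.sum_mul]

theorem sum_pd_carleman_flux {a : Fin n → Fin n → (Fin n → ℝ) → ℝ} {v w : (Fin n → ℝ) → ℝ}
    (ha : ∀ i j, DifferentiableAt ℝ (a i j) x) (hf : ∀ j, DifferentiableAt ℝ (pd j f) x)
    (hw : DifferentiableAt ℝ w x) (lam s r c : ℝ) :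
    ∑ i, pd i (fun y => (-(2 * lam * s * r)) * (∑ j, a i j y * pd j f y) * v y * c
        + 2 * (∑ j, a i j y * pd j f y) * (w y + lam * s * r * v y) * c) x
      = 2 * c * (ellOp a f x * w x + ∑ i, (∑ j, a i j x * pd j f x) * pd i w x) := by
  rw [← sum_pd_flux_mul ha hf hw]
  refine Finset.sum_congr rfl fun i _ => congrArg (pd i · x) (funext fun y => ?_)
  ring

end PartialDerivatives

theorem hasDerivAt_quadForm {ι : Type*} [Fintype ι] {b : ι → ι → ℝ} (hb : ∀ i j, b i j = b j i)
    {ξ : ι → ℝ → ℝ} {ξ' : ι → ℝ} {t : ℝ} (hξ : ∀ i, HasDerivAt (ξ i) (ξ' i) t) :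
    HasDerivAt (fun τ => ∑ i, ∑ j, b i j * ξ j τ * ξ i τ)
      (2 * ∑ i, (∑ j, b i j * ξ j t) * ξ' i) t := by
  refine (HasDerivAt.fun_sum fun i _ => HasDerivAt.fun_sum fun j _ =>
    ((hξ j).const_mul (b i j)).mul (hξ i)).congr_deriv ?_
  have h_swap : ∑ i, ∑ j, b i j * ξ' j * ξ i t = ∑ i, ∑ j, b i j * ξ j t * ξ' i := by
    rw [Finset.sum_comm]
    exact Finset.sum_congr rfl fun i _ => Finset.sum_congr rfl fun j _ => by rw [hb]; ring
  rw [Finset.sum_congr rfl fun i _ => Finset.sum_add_distrib, Finset.sum_add_distrib, h_swap]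
  simp only [Finset.sum_mul]
  ring

theorem Elliptic.mul_gradSq_le {n : ℕ} {a : Fin n → Fin n → (Fin n → ℝ) → ℝ} {μ₁ μ₂ : ℝ}
    (ha : Elliptic a μ₁ μ₂) {x : Fin n → ℝ} (hx : x ∈ cubeCl n) (f : (Fin n → ℝ) → ℝ) :
    μ₁ * gradSq f x ≤ ∑ i, ∑ j, a i j x * pd j f x * pd i f x := by
  refine (ha.2.2 x hx fun i => pd i f x).1.trans_eq ?_
  exact Finset.sum_congr rfl fun i _ => Finset.sum_congr rfl fun j _ => mul_right_comm _ _ _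

theorem cubeCl_mem_nhds {n : ℕ} {x : Fin n → ℝ} (hx : x ∈ cube n) : cubeCl n ∈ 𝓝 x :=
  mem_of_superset (set_pi_mem_nhds finite_univ fun i _ => Icc_mem_nhds (hx i).1 (hx i).2)
    fun _ hy i => hy i (mem_univ i)

section Weight

variable {lam s t : ℝ}

theorem hasDerivAt_const_mul_add_rpow (c p a : ℝ) (ht : 0 < t + a) :
    HasDerivAt (fun τ => c * (τ + a) ^ p) (c * (p * (t + a) ^ (p - 1))) t := by
  have h := (Real.hasDerivAt_rpow_const (p := p) (Or.inl ht.ne')).comp t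
    ((hasDerivAt_id t).add_const a)
  rw [mul_one] at h
  exact h.const_mul c

theorem Real.rpow_two_mul_sub_two {r : ℝ} (hr : 0 ≤ r) (p : ℝ) :
    r ^ (2 * p - 2) = (r ^ (p - 1)) ^ 2 := by
  rw [show 2 * p - 2 = (p - 1) * 2 by ring, Real.rpow_mul hr, Real.rpow_two]

theorem hasDerivAt_cwf_sq (ht : 0 < t + 2) :
    HasDerivAt (fun τ => cwf lam s τ ^ 2) (2 * (lam * s * (t + 2) ^ (s - 1)) * cwf lam s t ^ 2) t := by
  refine ((hasDerivAt_const_mul_add_rpow lam s 2 ht).exp.pow 2).congr_deriv ?_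
  simp only [cwf]
  ring

theorem hasDerivAt_carleman_energy {v Q : ℝ → ℝ} {w R : ℝ} (ht : 0 < t + 2)
    (hv : HasDerivAt v w t) (hQ : HasDerivAt Q (2 * R) t) :
    HasDerivAt (fun τ => (-(lam * s * (τ + 2) ^ (s - 1))) * v τ ^ 2 * cwf lam s τ ^ 2
        - Q τ * cwf lam s τ ^ 2)
      ((-(lam * s * ((s - 1) * (t + 2) ^ (s - 1 - 1))) * v t ^ 2
        - 2 * (lam * s * (t + 2) ^ (s - 1)) * v t * w
        - 2 * (lam * s * (t + 2) ^ (s - 1)) ^ 2 * v t ^ 2 - 2 * R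
        - 2 * (lam * s * (t + 2) ^ (s - 1)) * Q t) * cwf lam s t ^ 2) t := by
  refine ((((hasDerivAt_const_mul_add_rpow (lam * s) (s - 1) 2 ht).fun_neg.fun_mul
    (hv.fun_pow 2)).fun_mul (hasDerivAt_cwf_sq ht)).fun_sub
    (hQ.fun_mul (hasDerivAt_cwf_sq ht))).congr_deriv ?_
  simp only [Nat.cast_ofNat]
  ring

end Weight

theorem carleman_algebraic_ineq {μ σ σ' G Q φ : ℝ} (w ℓ v R : ℝ) (hσ : 0 ≤ σ) (hσ' : 0 ≤ σ')
    (hQ : μ * G ≤ Q) (hφ : 0 ≤ φ) :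
    (w ^ 2 / 4 + ℓ ^ 2) * φ + 2 * μ * σ * G * φ + σ ^ 2 / 2 * v ^ 2 * φ + 2 * φ * (ℓ * w + R)
      + (-σ' * v ^ 2 - 2 * σ * v * w - 2 * σ ^ 2 * v ^ 2 - 2 * R - 2 * σ * Q) * φ
      ≤ (w + ℓ) ^ 2 * φ := by
  nlinarith [mul_nonneg hφ (sq_nonneg (3 * w + 4 * σ * v)), mul_nonneg hφ (sq_nonneg (σ * v)),
    mul_nonneg (mul_nonneg hφ hσ') (sq_nonneg v), mul_nonneg (mul_nonneg hφ hσ) (sub_nonneg.2 hQ)]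

theorem pointwise_carleman_forward_general (n : ℕ) (T μ₁ : ℝ) (hμ₁ : 0 < μ₁) :
    ∃ C : ℝ, 0 < C ∧
      ∀ (μ₂ : ℝ), μ₁ ≤ μ₂ →
      ∀ (a : Fin n → Fin n → (Fin n → ℝ) → ℝ), Elliptic a μ₁ μ₂ →
      ∀ (u : (Fin n → ℝ) → ℝ → ℝ),
        ContDiffOn ℝ 3 (fun p : (Fin n → ℝ) × ℝ => u p.1 p.2) (cubeCl n ×ˢ Icc 0 T) →
      ∀ (lam s : ℝ), 0 < lam → 1 < s →
      ∀ x ∈ cube n, ∀ t ∈ Ioo (0:ℝ) T,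
      (deriv (u x) t + ellOp a (fun y => u y t) x) ^ 2 * cwf lam s t ^ 2
      ≥ ((deriv (u x) t) ^ 2 / 4 + (ellOp a (fun y => u y t) x) ^ 2) * cwf lam s t ^ 2
        + C * lam * s * (t + 2) ^ (s - 1) * gradSq (fun y => u y t) x * cwf lam s t ^ 2
        + lam ^ 2 * s ^ 2 / 2 * (t + 2) ^ (2 * s - 2) * u x t ^ 2 * cwf lam s t ^ 2
        + (∑ i, pd i (fun y =>
            (-(2 * lam * s * (t + 2) ^ (s - 1))) *
              (∑ j, a i j y * pd j (fun z => u z t) y) * u y t * cwf lam s t ^ 2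
            + 2 * (∑ j, a i j y * pd j (fun z => u z t) y) *
                (deriv (u y) t + lam * s * (t + 2) ^ (s - 1) * u y t) * cwf lam s t ^ 2) x)
        + deriv (fun τ =>
            (-(lam * s * (τ + 2) ^ (s - 1))) * u x τ ^ 2 * cwf lam s τ ^ 2
            - (∑ i, ∑ j, a i j x * pd j (fun z => u z τ) x * pd i (fun z => u z τ) x)
                * cwf lam s τ ^ 2) t := by
  refine ⟨2 * μ₁, by positivity, fun μ₂ _ a ha u hu lam s hlam hs x hx t ht => ?_⟩
  have hU : ContDiffAt ℝ 2 (fun p : (Fin n → ℝ) × ℝ => u p.1 p.2) (x, t) :=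
    (hu.contDiffAt (prod_mem_nhds (cubeCl_mem_nhds hx) (Icc_mem_nhds ht.1 ht.2))).of_le
      (by norm_num)
  have ht2 : 0 < t + 2 := by linarith [ht.1]
  have h_flux := sum_pd_carleman_flux (f := fun z => u z t) (v := fun y => u y t)
    (w := fun y => deriv (u y) t)
    (fun i j => ((ha.1 i j).contDiffAt (cubeCl_mem_nhds hx)).differentiableAt one_ne_zero)
    (fun j => hU.differentiableAt_fderiv_comp_prodMk_left _)
    hU.differentiableAt_deriv_comp_prodMk_right lam s ((t + 2) ^ (s - 1)) (cwf lam s t ^ 2)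
  have h_Q : HasDerivAt
      (fun τ => ∑ i, ∑ j, a i j x * pd j (fun z => u z τ) x * pd i (fun z => u z τ) x)
      (2 * ∑ i, (∑ j, a i j x * pd j (fun z => u z t) x) * pd i (fun y => deriv (u y) t) x) t :=
    hasDerivAt_quadForm (fun i j => ha.2.1 i j x) fun i => hU.hasDerivAt_fderiv_comp_prodMk_left _
  have h_u : HasDerivAt (u x) (deriv (u x) t) t :=
    (hU.differentiableAt two_ne_zero).hasDerivAt_comp_prodMk_right.differentiableAt.hasDerivAt
  have hs0 : 0 ≤ s := by linarith
  have hs1 : 0 ≤ s - 1 := by linarith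
  have h_ineq := carleman_algebraic_ineq (deriv (u x) t) (ellOp a (fun y => u y t) x) (u x t)
    (∑ i, (∑ j, a i j x * pd j (fun z => u z t) x) * pd i (fun y => deriv (u y) t) x)
    (mul_nonneg (mul_nonneg hlam.le hs0) (Real.rpow_nonneg ht2.le (s - 1)))
    (mul_nonneg (mul_nonneg hlam.le hs0)
      (mul_nonneg hs1 (Real.rpow_nonneg ht2.le (s - 1 - 1))))
    (ha.mul_gradSq_le (fun i => Ioo_subset_Icc_self (hx i)) (fun y => u y t))
    (sq_nonneg (cwf lam s t))
  rw [ge_iff_le, (hasDerivAt_carleman_energy ht2 h_u h_Q).deriv,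
    Real.rpow_two_mul_sub_two ht2.le]
  linarith

/-- **Pointwise Carleman estimate (5.23)** for the operator `∂_t + L`. -/
theorem pointwise_carleman_forward (n : ℕ) [NeZero n] (T μ₁ : ℝ) (hT : 0 < T) (hμ₁ : 0 < μ₁) :
    ∃ C : ℝ, 0 < C ∧
      ∀ (μ₂ : ℝ), μ₁ ≤ μ₂ →
      ∀ (a : Fin n → Fin n → (Fin n → ℝ) → ℝ), Elliptic a μ₁ μ₂ →
      ∀ (u : (Fin n → ℝ) → ℝ → ℝ),
        ContDiffOn ℝ 3 (fun p : (Fin n → ℝ) × ℝ => u p.1 p.2) (cubeCl n ×ˢ Icc 0 T) →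
      ∀ (lam s : ℝ), 0 < lam → 1 < s →
      ∀ x ∈ cube n, ∀ t ∈ Ioo (0:ℝ) T,
      (deriv (u x) t + ellOp a (fun y => u y t) x) ^ 2 * cwf lam s t ^ 2
      ≥ ((deriv (u x) t) ^ 2 / 4 + (ellOp a (fun y => u y t) x) ^ 2) * cwf lam s t ^ 2
        + C * lam * s * (t + 2) ^ (s - 1) * gradSq (fun y => u y t) x * cwf lam s t ^ 2
        + lam ^ 2 * s ^ 2 / 2 * (t + 2) ^ (2 * s - 2) * u x t ^ 2 * cwf lam s t ^ 2
        + (∑ i, pd i (fun y =>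
            (-(2 * lam * s * (t + 2) ^ (s - 1))) *
              (∑ j, a i j y * pd j (fun z => u z t) y) * u y t * cwf lam s t ^ 2
            + 2 * (∑ j, a i j y * pd j (fun z => u z t) y) *
                (deriv (u y) t + lam * s * (t + 2) ^ (s - 1) * u y t) * cwf lam s t ^ 2) x)
        + deriv (fun τ =>
            (-(lam * s * (τ + 2) ^ (s - 1))) * u x τ ^ 2 * cwf lam s τ ^ 2
            - (∑ i, ∑ j, a i j x * pd j (fun z => u z τ) x * pd i (fun z => u z τ) x)
                * cwf lam s τ ^ 2) t :=
  pointwise_carleman_forward_general n T μ₁ hμ₁
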